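/- If at each step the agent with the largest opinion (lowest index among ties) updates, then the neighbor set N_{M(x(t))} and z(t) = min_{i ∈ N_{M(x(t))}} x_i(t) are constant; opinions of agents in N_{M(x(0))} are non-increasing and bounded below by z(0); opinions of other agents are constant; and max_i x_i(k−1) − z(k−1) ≤ (1 − 1/k)·(max_i x_i(0) − z(0)). -/

import Mathlib

open scoped Classical
open Finset

noncomputable def nearList {n : ℕ} (x : Fin n → ℝ) (i : Fin n) : List (Fin n) :=
  @List.insertionSort (Fin n)
    (fun j j' => |x j - x i| < |x j' - x i| ∨ (|x j - x i| = |x j' - x i| ∧ j ≤ j'))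
    (Classical.decRel _) (List.finRange n)

/-- The set of the `k` agents nearest to `i` in opinion distance (ties broken by lower index). -/
noncomputable def nbr {n : ℕ} (k : ℕ) (x : Fin n → ℝ) (i : Fin n) : Finset (Fin n) :=
  ((nearList x i).take k).toFinset

/-- The asynchronous update `f(x,i)`. -/
noncomputable def upd {n : ℕ} (k : ℕ) (x : Fin n → ℝ) (i : Fin n) : Fin n → ℝ :=
  Function.update x i ((∑ j ∈ nbr k x i, x j) / k)

/-- A configuration is clustered if all neighbors of every agent share its opinion. -/
def Clustered {n : ℕ} (k : ℕ) (x : Fin n → ℝ) : Prop :=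
  ∀ i : Fin n, ∀ j ∈ nbr k x i, x j = x i

/-- `μ(x)`: lowest index attaining the minimum. -/
noncomputable def argminIdx {n : ℕ} [NeZero n] (x : Fin n → ℝ) : Fin n :=
  (Finset.univ.filter fun i => ∀ j, x i ≤ x j).min' (by
    obtain ⟨i, -, hi⟩ := Finset.exists_min_image Finset.univ x Finset.univ_nonempty
    exact ⟨i, Finset.mem_filter.mpr ⟨Finset.mem_univ _, fun j => hi j (Finset.mem_univ j)⟩⟩)

/-- `M(x)`: lowest index attaining the maximum. -/
noncomputable def argmaxIdx {n : ℕ} [NeZero n] (x : Fin n → ℝ) : Fin n :=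
  argminIdx (fun i => -x i)

/-- Trajectory of the dynamics with (possibly state-dependent) update selector `σ`. -/
noncomputable def traj {n : ℕ} (k : ℕ) (σ : ℕ → (Fin n → ℝ) → Fin n) (x0 : Fin n → ℝ) :
    ℕ → Fin n → ℝ
  | 0 => x0
  | t + 1 => upd k (traj k σ x0 t) (σ t (traj k σ x0 t))

/-!
Rank the agents by decreasing opinion, ties broken by lower index. The neighbour set of the
maximal agent `M(x)` is the set `T` of the first `k` agents in this ranking, and replacing
`x_M` by the mean over `T` keeps `T` in front: the mean is at least every opinion outside `T`,
and it equals one of them only if all of `T` shares that opinion, in which case the tie-break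
already favoured `T`. So `T` never changes, opinions on `T` decrease without falling below their
minimum `z`, and opinions outside `T` never move.

For the contraction let `c = max - (max - z) / k`. Every update sets the current maximum to a mean
that is at most `c`, opinions never increase, and initially at most `k - 1` agents (those of `T`
other than its minimiser) lie above `c`; so the number of agents above `c` drops by one per step
until it is zero, which happens by time `k - 1`.
-/

open Function
open scoped BigOperators

lemma expect_le_sub_div_card {ι : Type*} {s : Finset ι} {f : ι → ℝ} {M : ℝ} {i : ι}
    (hi : i ∈ s) (hf : ∀ j ∈ s, f j ≤ M) : 𝔼 j ∈ s, f j ≤ M - (M - f i) / #s := by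
  have hs : (0 : ℝ) < #s := by exact_mod_cast card_pos.2 ⟨i, hi⟩
  have hrest : ∑ j ∈ s.erase i, f j ≤ (#s - 1 : ℝ) * M := by
    have := sum_le_card_nsmul (s.erase i) f M fun j hj => hf j (mem_of_mem_erase hj)
    rwa [card_erase_of_mem hi, nsmul_eq_mul, Nat.cast_pred (card_pos.2 ⟨i, hi⟩)] at this
  have hrhs : (M - (M - f i) / #s) * #s = f i + (#s - 1 : ℝ) * M := by
    field_simp
    ring
  rw [expect_eq_sum_div_card, ← add_sum_erase s f hi, div_le_iff₀ hs, hrhs]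
  linarith

variable {n : ℕ}

def IsTopSet (f : Fin n → ℝ) (T : Finset (Fin n)) : Prop :=
  ∀ a ∈ T, ∀ b ∉ T, f b < f a ∨ (f a = f b ∧ a < b)

namespace IsTopSet

variable {f : Fin n → ℝ} {T T' : Finset (Fin n)} {a b : Fin n}

lemma le_of_mem_of_notMem (h : IsTopSet f T) (ha : a ∈ T) (hb : b ∉ T) : f b ≤ f a := by
  rcases h a ha b hb with hlt | ⟨heq, -⟩
  exacts [hlt.le, heq.ge]

lemma eq_of_card_eq (h : IsTopSet f T) (h' : IsTopSet f T') (hcard : #T = #T') : T = T' := by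
  by_contra hne
  obtain ⟨a, haT, haT'⟩ := not_subset.1 fun hs => hne (eq_of_subset_of_card_le hs hcard.ge)
  obtain ⟨b, hbT', hbT⟩ := not_subset.1 fun hs => hne (eq_of_subset_of_card_le hs hcard.le).symm
  rcases h a haT b hbT with h1 | ⟨h1, h1'⟩ <;> rcases h' b hbT' a haT' with h2 | ⟨h2, h2'⟩
  all_goals first | linarith | exact h1'.not_gt h2'

end IsTopSet

lemma isTopSet_add_const_iff (f : Fin n → ℝ) (c : ℝ) (T : Finset (Fin n)) :
    IsTopSet (fun j => f j + c) T ↔ IsTopSet f T := by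
  simp only [IsTopSet, add_lt_add_iff_right, add_left_inj]

section Neighbours

variable {k : ℕ} (x : Fin n → ℝ) (i : Fin n)

lemma nearList_perm : (nearList x i).Perm (List.finRange n) :=
  @List.perm_insertionSort (Fin n) _ (Classical.decRel _) (List.finRange n)

lemma nearList_pairwise : (nearList x i).Pairwise
    fun j j' => |x j - x i| < |x j' - x i| ∨ (|x j - x i| = |x j' - x i| ∧ j ≤ j') := by
  have : Std.Total fun j j' : Fin n =>
      |x j - x i| < |x j' - x i| ∨ (|x j - x i| = |x j' - x i| ∧ j ≤ j') :=
    ⟨fun a b => by grind⟩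
  have : IsTrans (Fin n)
      fun j j' => |x j - x i| < |x j' - x i| ∨ (|x j - x i| = |x j' - x i| ∧ j ≤ j') :=
    ⟨fun _ _ _ => by grind⟩
  exact @List.pairwise_insertionSort _ _ (Classical.decRel _) _ _ _

lemma isTopSet_nbr : IsTopSet (fun j => -|x j - x i|) (nbr k x i) := by
  intro a ha b hb
  have hbdrop : b ∈ (nearList x i).drop k := by
    have hb' : b ∈ (nearList x i).take k ++ (nearList x i).drop k := by
      rw [List.take_append_drop]
      exact (nearList_perm x i).mem_iff.2 (List.mem_finRange b)
    exact (List.mem_append.1 hb').resolve_left fun h => hb (List.mem_toFinset.2 h)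
  have hsorted := List.take_append_drop k (nearList x i) ▸ nearList_pairwise x i
  rcases List.pairwise_append.1 hsorted |>.2.2 a (List.mem_toFinset.1 ha) b hbdrop with
    h | ⟨h, h'⟩
  · exact .inl (neg_lt_neg h)
  · exact .inr ⟨neg_inj.2 h, h'.lt_of_ne (ne_of_mem_of_not_mem ha hb)⟩

lemma card_nbr (hkn : k ≤ n) : #(nbr k x i) = k := by
  have hnodup := (nearList_perm x i).nodup_iff.2 (List.nodup_finRange n)
  rw [nbr, List.toFinset_card_of_nodup hnodup.take, List.length_take,
    (nearList_perm x i).length_eq, List.length_finRange, min_eq_left hkn]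

lemma upd_eq_update_expect (hkn : k ≤ n) :
    upd k x i = update x i (𝔼 j ∈ nbr k x i, x j) := by
  rw [upd, expect_eq_sum_div_card, card_nbr x i hkn]

end Neighbours

section Argmax

variable [NeZero n] {k : ℕ} (x : Fin n → ℝ) {T : Finset (Fin n)}

lemma le_argmaxIdx (j : Fin n) : x j ≤ x (argmaxIdx x) := by
  have : -x (argmaxIdx x) ≤ -x j := by
    unfold argmaxIdx argminIdx
    exact (mem_filter.1 (min'_mem (univ.filter fun i => ∀ j, -x i ≤ -x j) _)).2 j
  linarith

lemma argmaxIdx_le_of_eq {j : Fin n} (hj : x j = x (argmaxIdx x)) : argmaxIdx x ≤ j :=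
  min'_le _ j <| mem_filter.2 ⟨mem_univ j, fun i => by simpa [hj] using le_argmaxIdx x i⟩

lemma nbr_argmaxIdx_eq_iff (hkn : k ≤ n) :
    nbr k x (argmaxIdx x) = T ↔ #T = k ∧ IsTopSet x T := by
  have hdist : (fun j => -|x j - x (argmaxIdx x)|) = fun j => x j + -x (argmaxIdx x) := by
    ext j
    rw [abs_of_nonpos (sub_nonpos.2 (le_argmaxIdx x j))]
    ring
  have htop := isTopSet_nbr (k := k) x (argmaxIdx x)
  rw [hdist, isTopSet_add_const_iff] at htop
  refine ⟨fun h => h ▸ ⟨card_nbr x _ hkn, htop⟩, fun ⟨hT, hTtop⟩ => ?_⟩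
  exact htop.eq_of_card_eq hTtop (by rw [card_nbr x _ hkn, hT])

lemma IsTopSet.argmaxIdx_mem (h : IsTopSet x T) (hT : T.Nonempty) : argmaxIdx x ∈ T := by
  by_contra hM
  obtain ⟨a, ha⟩ := hT
  rcases h a ha _ hM with hlt | ⟨heq, hlt⟩
  · exact (le_argmaxIdx x a).not_gt hlt
  · exact (argmaxIdx_le_of_eq x heq).not_gt hlt

end Argmax

lemma IsTopSet.update_expect {x : Fin n → ℝ} {T : Finset (Fin n)} {m : Fin n}
    (h : IsTopSet x T) (hm : m ∈ T) : IsTopSet (update x m (𝔼 j ∈ T, x j)) T := by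
  intro a ha b hb
  rw [update_of_ne (ne_of_mem_of_not_mem hm hb).symm]
  by_cases ham : a = m
  · subst ham
    rw [update_self]
    have hle : ∀ j ∈ T, x b ≤ x j := fun j hj => h.le_of_mem_of_notMem hj hb
    rcases h a ha b hb with hlt | ⟨-, hab⟩
    · exact .inl (lt_expect hle ⟨a, ha, hlt⟩)
    · rcases (le_expect ⟨a, ha⟩ hle).lt_or_eq with hlt | heq
      exacts [.inl hlt, .inr ⟨heq.symm, hab⟩]
  · rw [update_of_ne ham]
    exact h a ha b hb

section Trajectory

variable [NeZero n] {k : ℕ} {T : Finset (Fin n)}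

lemma isTopSet_traj (hkn : k ≤ n) (hT : #T = k) {x0 : Fin n → ℝ} (h0 : IsTopSet x0 T)
    (t : ℕ) :
    IsTopSet (traj k (fun _ x => argmaxIdx x) x0 t) T := by
  obtain rfl | hne := T.eq_empty_or_nonempty
  · simp [IsTopSet]
  induction t with
  | zero => exact h0
  | succ t ih =>
    rw [traj, upd_eq_update_expect _ _ hkn, (nbr_argmaxIdx_eq_iff _ hkn).2 ⟨hT, ih⟩]
    exact ih.update_expect (ih.argmaxIdx_mem _ hne)

def IsMaxAveraging (T : Finset (Fin n)) (X : ℕ → Fin n → ℝ) : Prop :=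
  ∀ t, argmaxIdx (X t) ∈ T ∧ X (t + 1) = update (X t) (argmaxIdx (X t)) (𝔼 j ∈ T, X t j)

lemma isMaxAveraging_traj (hkn : k ≤ n) (hT : #T = k) (hne : T.Nonempty) {x0 : Fin n → ℝ}
    (h0 : IsTopSet x0 T) : IsMaxAveraging T (traj k (fun _ x => argmaxIdx x) x0) := by
  intro t
  have ht := isTopSet_traj hkn hT h0 t
  refine ⟨ht.argmaxIdx_mem _ hne, ?_⟩
  rw [traj, upd_eq_update_expect _ _ hkn, (nbr_argmaxIdx_eq_iff _ hkn).2 ⟨hT, ht⟩]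

namespace IsMaxAveraging

variable {X : ℕ → Fin n → ℝ}

lemma apply_of_notMem (h : IsMaxAveraging T X) {i : Fin n} (hi : i ∉ T) (t : ℕ) :
    X t i = X 0 i := by
  induction t with
  | zero => rfl
  | succ t ih =>
    rw [(h t).2, update_of_ne (ne_of_mem_of_not_mem (h t).1 hi).symm, ih]

lemma antitone (h : IsMaxAveraging T X) (i : Fin n) : Antitone fun t => X t i := by
  refine antitone_nat_of_succ_le fun t => ?_
  obtain ⟨hM, hstep⟩ := h t
  rw [hstep]
  by_cases hi : i = argmaxIdx (X t)
  · subst hi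
    rw [update_self]
    exact expect_le ⟨_, hM⟩ fun j _ => le_argmaxIdx (X t) j
  · rw [update_of_ne hi]

lemma le_apply (h : IsMaxAveraging T X) {z : ℝ} (hz : ∀ j ∈ T, z ≤ X 0 j) (t : ℕ) :
    ∀ j ∈ T, z ≤ X t j := by
  induction t with
  | zero => exact hz
  | succ t ih =>
    intro j hj
    rw [(h t).2]
    by_cases hjM : j = argmaxIdx (X t)
    · rw [hjM, update_self]
      exact le_expect ⟨j, hj⟩ ih
    · rw [update_of_ne hjM]
      exact ih j hj

lemma card_filter_lt_le_sub (h : IsMaxAveraging T X) {c : ℝ}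
    (hc : ∀ t, 𝔼 j ∈ T, X t j ≤ c) (t : ℕ) :
    #{i | c < X t i} ≤ #{i | c < X 0 i} - t := by
  induction t with
  | zero => simp
  | succ t ih =>
    obtain ⟨-, hstep⟩ := h t
    have hsub : ({i | c < X (t + 1) i} : Finset (Fin n)) ⊆
        ({i | c < X t i} : Finset (Fin n)) := fun i hi => by
      simp only [mem_filter, mem_univ, true_and] at hi ⊢
      exact hi.trans_le (h.antitone i t.le_succ)
    rcases ({i | c < X (t + 1) i} : Finset (Fin n)).eq_empty_or_nonempty with he | ⟨i, hi⟩
    · simp [he]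
    · have hM : argmaxIdx (X t) ∈ ({i | c < X t i} : Finset (Fin n)) := by
        simp only [mem_filter, mem_univ, true_and] at hi ⊢
        exact hi.trans_le ((h.antitone i t.le_succ).trans (le_argmaxIdx (X t) i))
      have hM' : argmaxIdx (X t) ∉ ({i | c < X (t + 1) i} : Finset (Fin n)) := by
        simp only [mem_filter, mem_univ, true_and, not_lt]
        rw [hstep, update_self]
        exact hc t
      have := card_lt_card ((ssubset_iff_of_subset hsub).2 ⟨_, hM, hM'⟩)
      omega

lemma apply_le_of_card_filter_lt_le (h : IsMaxAveraging T X) {c : ℝ}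
    (hc : ∀ t, 𝔼 j ∈ T, X t j ≤ c) {m : ℕ}
    (hm : #{i | c < X 0 i} ≤ m) (i : Fin n) : X m i ≤ c := by
  have hempty : ({i | c < X m i} : Finset (Fin n)) = ∅ :=
    card_eq_zero.1 (by have := h.card_filter_lt_le_sub hc m; omega)
  simpa using (eq_empty_iff_forall_notMem.1 hempty i)

lemma sSup_sub_le (h : IsMaxAveraging T X) (hT : #T = k) (h0 : IsTopSet (X 0) T) {i0 : Fin n}
    (hi0 : i0 ∈ T) :
    sSup (Set.range (X (k - 1))) - X 0 i0 ≤
      (1 - 1 / (k : ℝ)) * (sSup (Set.range (X 0)) - X 0 i0) := by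
  subst hT
  set M := X 0 (argmaxIdx (X 0))
  set c := M - (M - X 0 i0) / #T
  have hk : (1 : ℝ) ≤ #T := by exact_mod_cast card_pos.2 ⟨i0, hi0⟩
  have hc : ∀ t, 𝔼 j ∈ T, X t j ≤ c := fun t =>
    (expect_le_expect fun j _ => h.antitone j (Nat.zero_le t)).trans
      (expect_le_sub_div_card hi0 fun j _ => le_argmaxIdx (X 0) j)
  have hzc : X 0 i0 ≤ c := by
    have := div_le_self (sub_nonneg.2 (le_argmaxIdx (X 0) i0)) hk
    linarith
  have hcount : #{i | c < X 0 i} ≤ #T - 1 := by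
    rw [← card_erase_of_mem hi0]
    refine card_le_card fun i hi => ?_
    rw [mem_filter] at hi
    have hiT : i ∈ T := by
      by_contra hiT
      linarith [h0.le_of_mem_of_notMem hi0 hiT]
    exact mem_erase.2 ⟨by rintro rfl; linarith, hiT⟩
  have hsup0 : sSup (Set.range (X 0)) = M :=
    IsGreatest.csSup_eq ⟨⟨_, rfl⟩, Set.forall_mem_range.2 (le_argmaxIdx (X 0))⟩
  have hsup : sSup (Set.range (X (#T - 1))) ≤ c :=
    csSup_le (Set.range_nonempty _) <|
      Set.forall_mem_range.2 (h.apply_le_of_card_filter_lt_le hc hcount)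
  rw [hsup0]
  calc _ ≤ c - X 0 i0 := by linarith
    _ = _ := by ring

end IsMaxAveraging

end Trajectory

/-- when the maximum-opinion agent always updates, the neighbor set and `z(t)`
are constant, opinions inside are non-increasing and bounded below by `z(0)`, other opinions
are constant, and the gap `max - z` contracts by `1 - 1/k` after `k-1` steps. -/
theorem max_update_invariants {n k : ℕ} [NeZero n] (hk : 1 ≤ k) (hkn : k ≤ n)
    (x0 : Fin n → ℝ) (X : ℕ → Fin n → ℝ)
    (hX : X = traj k (fun _ x => argmaxIdx x) x0)
    (z : ℕ → ℝ)
    (hz : ∀ t, z t = sInf (X t '' (nbr k (X t) (argmaxIdx (X t)) : Set (Fin n)))) :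
    (∀ t, nbr k (X t) (argmaxIdx (X t)) = nbr k x0 (argmaxIdx x0)) ∧
    (∀ t, z t = z 0) ∧
    (∀ i ∈ nbr k x0 (argmaxIdx x0), Antitone (fun t => X t i) ∧ ∀ t, z 0 ≤ X t i) ∧
    (∀ i ∉ nbr k x0 (argmaxIdx x0), ∀ t, X t i = x0 i) ∧
    (sSup (Set.range (X (k - 1))) - z (k - 1) ≤
      (1 - 1 / (k : ℝ)) * (sSup (Set.range x0) - z 0)) := by
  set S := nbr k x0 (argmaxIdx x0)
  obtain ⟨hScard, hS⟩ := (nbr_argmaxIdx_eq_iff x0 hkn).1 rfl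
  have hSne : S.Nonempty := card_pos.1 (by rw [hScard]; exact hk)
  have hX0 : X 0 = x0 := hX ▸ rfl
  have hnbr : ∀ t, nbr k (X t) (argmaxIdx (X t)) = S := fun t =>
    (nbr_argmaxIdx_eq_iff _ hkn).2 ⟨hScard, hX ▸ isTopSet_traj hkn hScard hS t⟩
  have hmax : IsMaxAveraging S X := hX ▸ isMaxAveraging_traj hkn hScard hSne hS
  obtain ⟨i0, hi0, hmin⟩ := S.exists_min_image x0 hSne
  have hlow : ∀ t, ∀ j ∈ S, x0 i0 ≤ X t j := hmax.le_apply (hX0 ▸ hmin)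
  have hzt : ∀ t, z t = x0 i0 := fun t => by
    rw [hz, hnbr]
    refine IsLeast.csInf_eq ⟨⟨i0, hi0, ?_⟩, Set.forall_mem_image.2 (hlow t)⟩
    exact le_antisymm (hX0 ▸ hmax.antitone i0 (Nat.zero_le t)) (hlow t i0 hi0)
  refine ⟨hnbr, fun t => by rw [hzt, hzt], fun i hi => ⟨hmax.antitone i, fun t => ?_⟩,
    fun i hi t => hX0 ▸ hmax.apply_of_notMem hi t, ?_⟩
  · rw [hzt]
    exact hlow t i hi
  · rw [hzt, hzt, ← hX0]
    exact hmax.sSup_sub_le hScard (hX0 ▸ hS) hi0
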